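/- Let U, V ⊆ ℂ be open sets. Let Ψ₁, Ψ₂ : ℂ → ℂ be differentiable on U with Ψ₁(x)·Ψ₂'(x) − Ψ₂(x)·Ψ₁'(x) = 1 and Ψ₁(x) ≠ 0 for all x ∈ U, and let ψ₁, ψ₂ : ℂ → ℂ be differentiable on V with ψ₁(w)·ψ₂'(w) − ψ₂(w)·ψ₁'(w) = 1 and ψ₁(w) ≠ 0 for all w ∈ V. Let z : ℂ → ℂ be differentiable on U with z(U) ⊆ V and suppose Ψ₂(x)·ψ₁(z(x)) = Ψ₁(x)·ψ₂(z(x)) for all x ∈ U. Then z'(x)·Ψ₁(x)² = ψ₁(z(x))² for all x ∈ U. -/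

import Mathlib

/-!
Differentiating the ratio identity `Ψ₂ · (ψ₁ ∘ z) = Ψ₁ · (ψ₂ ∘ z)` gives one linear relation
between the derivatives; combined with the identity itself, it turns the Wronskian of `ψ₁, ψ₂`
at `z x`, scaled by `z' Ψ₁²`, into the Wronskian of `Ψ₁, Ψ₂` at `x`, scaled by `ψ₁(z x)²`.
Both Wronskians are `1`.
-/

open Filter Topology

theorem mul_sq_mul_wronskian_eq_of_ratio {R : Type*} [CommRing R]
    {P₁ P₂ P₁' P₂' q₁ q₂ q₁' q₂' z' : R}
    (hratio : P₂ * q₁ = P₁ * q₂)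
    (hderiv : P₂' * q₁ + P₂ * (q₁' * z') = P₁' * q₂ + P₁ * (q₂' * z')) :
    z' * P₁ ^ 2 * (q₁ * q₂' - q₂ * q₁') = q₁ ^ 2 * (P₁ * P₂' - P₂ * P₁') := by
  linear_combination (P₁' * q₁ + z' * q₁' * P₁) * hratio - P₁ * q₁ * hderiv

theorem deriv_mul_comp_eq_of_eventuallyEq {𝕜 : Type*} [NontriviallyNormedField 𝕜]
    {f₁ f₂ g₁ g₂ z : 𝕜 → 𝕜} {x : 𝕜}
    (hf₁ : DifferentiableAt 𝕜 f₁ x) (hf₂ : DifferentiableAt 𝕜 f₂ x)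
    (hg₁ : DifferentiableAt 𝕜 g₁ (z x)) (hg₂ : DifferentiableAt 𝕜 g₂ (z x))
    (hz : DifferentiableAt 𝕜 z x)
    (h : (fun y => f₁ y * g₁ (z y)) =ᶠ[𝓝 x] fun y => f₂ y * g₂ (z y)) :
    deriv f₁ x * g₁ (z x) + f₁ x * (deriv g₁ (z x) * deriv z x) =
      deriv f₂ x * g₂ (z x) + f₂ x * (deriv g₂ (z x) * deriv z x) := by
  have h₁ := hf₁.hasDerivAt.mul (hg₁.hasDerivAt.comp x hz.hasDerivAt)
  have h₂ := hf₂.hasDerivAt.mul (hg₂.hasDerivAt.comp x hz.hasDerivAt)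
  exact (h₁.congr_of_eventuallyEq h.symm).unique h₂

theorem point_transformation_wronskian_relation
    (U V : Set ℂ) (hU : IsOpen U)
    (Ψ₁ Ψ₂ ψ₁ ψ₂ z : ℂ → ℂ)
    (hΨ₁ : ∀ x ∈ U, DifferentiableAt ℂ Ψ₁ x)
    (hΨ₂ : ∀ x ∈ U, DifferentiableAt ℂ Ψ₂ x)
    (hW : ∀ x ∈ U, Ψ₁ x * deriv Ψ₂ x - Ψ₂ x * deriv Ψ₁ x = 1)
    (hψ₁ : ∀ w ∈ V, DifferentiableAt ℂ ψ₁ w)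
    (hψ₂ : ∀ w ∈ V, DifferentiableAt ℂ ψ₂ w)
    (hw : ∀ w ∈ V, ψ₁ w * deriv ψ₂ w - ψ₂ w * deriv ψ₁ w = 1)
    (hz : ∀ x ∈ U, DifferentiableAt ℂ z x)
    (hzV : Set.MapsTo z U V)
    (hratio : ∀ x ∈ U, Ψ₂ x * ψ₁ (z x) = Ψ₁ x * ψ₂ (z x)) :
    ∀ x ∈ U, deriv z x * (Ψ₁ x) ^ 2 = (ψ₁ (z x)) ^ 2 := by
  intro x hx
  have hzx : z x ∈ V := hzV hx
  have hderiv := deriv_mul_comp_eq_of_eventuallyEq (hΨ₂ x hx) (hΨ₁ x hx) (hψ₁ _ hzx)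
    (hψ₂ _ hzx) (hz x hx) (eventuallyEq_of_mem (hU.mem_nhds hx) hratio)
  simpa [hW x hx, hw _ hzx] using mul_sq_mul_wronskian_eq_of_ratio (hratio x hx) hderiv
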